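/- Let k*, q, k̄ ∈ ℝ^d be nonzero vectors with d ≥ 1. Suppose CosSim(k*, q) = β > 0 and CosSim(k̄, q) = α < 0. Then CosSim(k̄, k*) ≤ 1 + αβ − α²/2 − β²/2. -/

import Mathlib

/-!
Normalize the three vectors to unit vectors `a = k*/‖k*‖`, `u = q/‖q‖`, `b = k̄/‖k̄‖`, so that
`β = ⟪a, u⟫` and `α = ⟪b, u⟫`. Removing the `u`-components gives `a' = a - β u` and `b' = b - α u`
with `‖a'‖² = 1 - β²`, `‖b'‖² = 1 - α²` and `⟪b', a'⟫ = ⟪b, a⟫ - αβ`; Young's inequality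
`2⟪b', a'⟫ ≤ ‖b'‖² + ‖a'‖²` is then exactly the claim.
-/

section UnitVectors

open scoped RealInnerProductSpace

variable {F : Type*} [NormedAddCommGroup F] [InnerProductSpace ℝ F]

theorem real_inner_normalize_normalize (x y : F) :
    ⟪NormedSpace.normalize x, NormedSpace.normalize y⟫ = ⟪x, y⟫ / (‖x‖ * ‖y‖) := by
  rw [NormedSpace.normalize, NormedSpace.normalize, real_inner_smul_left, real_inner_smul_right,
    div_eq_mul_inv, mul_inv]
  ring

theorem real_inner_sub_inner_smul_of_norm_eq_one {u : F} (hu : ‖u‖ = 1) (x y : F) :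
    ⟪x - ⟪x, u⟫ • u, y - ⟪y, u⟫ • u⟫ = ⟪x, y⟫ - ⟪x, u⟫ * ⟪y, u⟫ := by
  have huu : ⟪u, u⟫ = 1 := by rw [real_inner_self_eq_norm_sq, hu, one_pow]
  simp only [inner_sub_left, inner_sub_right, real_inner_smul_left, real_inner_smul_right, huu,
    real_inner_comm u]
  ring

theorem real_inner_le_of_norm_eq_one {a b u : F} (ha : ‖a‖ = 1) (hb : ‖b‖ = 1) (hu : ‖u‖ = 1) :
    ⟪b, a⟫ ≤ 1 + ⟪b, u⟫ * ⟪a, u⟫ - ⟪b, u⟫ ^ 2 / 2 - ⟪a, u⟫ ^ 2 / 2 := by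
  set a' := a - ⟪a, u⟫ • u
  set b' := b - ⟪b, u⟫ • u
  have hperp := real_inner_sub_inner_smul_of_norm_eq_one hu
  have ha' : ‖a'‖ ^ 2 = 1 - ⟪a, u⟫ ^ 2 := by
    rw [← real_inner_self_eq_norm_sq, hperp, real_inner_self_eq_norm_sq, ha]
    ring
  have hb' : ‖b'‖ ^ 2 = 1 - ⟪b, u⟫ ^ 2 := by
    rw [← real_inner_self_eq_norm_sq, hperp, real_inner_self_eq_norm_sq, hb]
    ring
  have hyoung : 0 ≤ ‖b' - a'‖ ^ 2 := sq_nonneg _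
  rw [norm_sub_sq_real, ha', hb', hperp] at hyoung
  linarith

end UnitVectors

theorem keydiff_cossim_bound_general
    (d : ℕ)
    (kstar q kbar : EuclideanSpace ℝ (Fin d))
    (hkstar : kstar ≠ 0) (hq : q ≠ 0) (hkbar : kbar ≠ 0)
    (α β : ℝ)
    (hβ : (inner ℝ kstar q : ℝ) / (‖kstar‖ * ‖q‖) = β)
    (hα : (inner ℝ kbar q : ℝ) / (‖kbar‖ * ‖q‖) = α) :
    (inner ℝ kbar kstar : ℝ) / (‖kbar‖ * ‖kstar‖) ≤ 1 + α * β - α ^ 2 / 2 - β ^ 2 / 2 := by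
  rw [← real_inner_normalize_normalize] at hα hβ ⊢
  subst hα hβ
  exact real_inner_le_of_norm_eq_one (NormedSpace.norm_normalize_eq_one_iff.mpr hkstar)
    (NormedSpace.norm_normalize_eq_one_iff.mpr hkbar) (NormedSpace.norm_normalize_eq_one_iff.mpr hq)

theorem keydiff_cossim_bound
    (d : ℕ) (hd : 1 ≤ d)
    (kstar q kbar : EuclideanSpace ℝ (Fin d))
    (hkstar : kstar ≠ 0) (hq : q ≠ 0) (hkbar : kbar ≠ 0)
    (α β : ℝ)
    (hβ : (inner ℝ kstar q : ℝ) / (‖kstar‖ * ‖q‖) = β) (hβpos : 0 < β)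
    (hα : (inner ℝ kbar q : ℝ) / (‖kbar‖ * ‖q‖) = α) (hαneg : α < 0) :
    (inner ℝ kbar kstar : ℝ) / (‖kbar‖ * ‖kstar‖) ≤ 1 + α * β - α ^ 2 / 2 - β ^ 2 / 2 :=
  keydiff_cossim_bound_general d kstar q kbar hkstar hq hkbar α β hβ hα
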